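/- Suppose S ⊂ ℝⁿ is both the convex hull of the finite set {v₁,…,v_μ} and the polyhedron {s ∈ ℝⁿ : g_h·s ≤ ξ_h for h = 1,…,H} with all ξ_h > 0. Let Q = conv{w₁,…,w_ν} ⊂ ℝ^p and D = conv{r₁,…,r_η} ⊂ ℝ^l. Assume that for every i ∈ {1,…,μ}, j ∈ {1,…,ν}, k ∈ {1,…,η}, and every index h with g_h·vᵢ = ξ_h, one has g_h·(F(w_j)·vᵢ + E(w_j)·r_k) ≤ 0. Then for every s ∈ S, every q ∈ Q, every δ ∈ D, and every index h with g_h·s = ξ_h, one has g_h·(F(q)·s + E(q)·δ) ≤ 0. -/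

import Mathlib

open Set Matrix

/-- The affine matrix function `F(q) = F₀ + ∑ l, q_l F_l`. -/
noncomputable def matF {n p : ℕ} (F0 : Matrix (Fin n) (Fin n) ℝ)
    (F : Fin p → Matrix (Fin n) (Fin n) ℝ) (q : Fin p → ℝ) : Matrix (Fin n) (Fin n) ℝ :=
  F0 + ∑ l, q l • F l

/-- The affine matrix function `E(q) = E₀ + ∑ l, q_l E_l`. -/
noncomputable def matE {n l p : ℕ} (E0 : Matrix (Fin n) (Fin l) ℝ)
    (E : Fin p → Matrix (Fin n) (Fin l) ℝ) (q : Fin p → ℝ) : Matrix (Fin n) (Fin l) ℝ :=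
  E0 + ∑ i, q i • E i

/-! The quantity `g_h ⬝ᵥ (F(q) s + E(q) δ)` is affine in each of `s`, `q` and `δ` separately, so
on a convex hull it is dominated by its value at a generating point (maximum principle for convex
functions). For `s` that point can be taken on the facet `g_h ⬝ᵥ x = ξ_h`: all vertices satisfy
`g_h ⬝ᵥ v_i ≤ ξ_h`, so a convex combination attaining `ξ_h` only charges vertices on the facet.
Moving `s`, then `q`, then `δ` to vertices reduces the claim to the hypothesis. -/

section Convex

variable {𝕜 E : Type*} [Field 𝕜] [LinearOrder 𝕜] [IsStrictOrderedRing 𝕜]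
  [AddCommGroup E] [Module 𝕜 E]

theorem LinearMap.exists_ge_of_mem_convexHull (f : E →ₗ[𝕜] 𝕜) {t : Set E} {x : E}
    (hx : x ∈ convexHull 𝕜 t) : ∃ y ∈ t, f x ≤ f y :=
  (f.convexOn convex_univ).exists_ge_of_mem_convexHull (subset_univ t) hx

theorem mem_convexHull_setOf_eq_of_forall_le (f : E →ₗ[𝕜] 𝕜) {t : Set E} {c : 𝕜}
    (hle : ∀ y ∈ t, f y ≤ c) {x : E} (hx : x ∈ convexHull 𝕜 t) (hfx : f x = c) :
    x ∈ convexHull 𝕜 {y ∈ t | f y = c} := by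
  classical
  rw [convexHull_eq] at hx
  obtain ⟨ι, u, w, z, hw₀, hw₁, hz, rfl⟩ := hx
  have hslack : ∑ i ∈ u, w i * (c - f (z i)) = 0 := by
    rw [Finset.centerMass_eq_of_sum_1 _ _ hw₁, map_sum] at hfx
    simp only [map_smul, smul_eq_mul] at hfx
    simp only [mul_sub, Finset.sum_sub_distrib, ← Finset.sum_mul, hw₁, one_mul, hfx, sub_self]
  have hface : ∀ i ∈ u, w i ≠ 0 → f (z i) = c := fun i hi hwi => by
    have := (Finset.sum_eq_zero_iff_of_nonneg fun j hj =>
      mul_nonneg (hw₀ j hj) (sub_nonneg.2 (hle _ (hz j hj)))).1 hslack i hi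
    linarith [(mul_eq_zero.1 this).resolve_left hwi]
  rw [← Finset.centerMass_filter_ne_zero]
  refine Finset.centerMass_mem_convexHull _ (fun i hi => hw₀ i (Finset.mem_filter.1 hi).1) ?_
    fun i hi => ?_
  · rw [Finset.sum_filter_ne_zero, hw₁]; exact one_pos
  · obtain ⟨hi, hwi⟩ := Finset.mem_filter.1 hi
    exact ⟨hz i hi, hface i hi hwi⟩

end Convex

section Matrix

variable {m n : Type*} [Fintype m] [Fintype n] [DecidableEq n]

theorem exists_dotProduct_ge_of_mem_convexHull (u : n → ℝ) {t : Set (n → ℝ)} {x : n → ℝ}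
    (hx : x ∈ convexHull ℝ t) : ∃ y ∈ t, u ⬝ᵥ x ≤ u ⬝ᵥ y :=
  (dotProductEquiv ℝ n u).exists_ge_of_mem_convexHull hx

theorem exists_dotProduct_mulVec_ge_of_mem_convexHull (g : m → ℝ) (A : Matrix m n ℝ)
    {t : Set (n → ℝ)} {x : n → ℝ} (hx : x ∈ convexHull ℝ t) :
    ∃ y ∈ t, g ⬝ᵥ (A *ᵥ x) ≤ g ⬝ᵥ (A *ᵥ y) := by
  simpa only [dotProduct_mulVec] using exists_dotProduct_ge_of_mem_convexHull (g ᵥ* A) hx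

end Matrix

theorem dotProduct_matF_mulVec_add_matE_mulVec {n l p : ℕ} (F0 : Matrix (Fin n) (Fin n) ℝ)
    (F : Fin p → Matrix (Fin n) (Fin n) ℝ) (E0 : Matrix (Fin n) (Fin l) ℝ)
    (E : Fin p → Matrix (Fin n) (Fin l) ℝ) (g s : Fin n → ℝ) (δ : Fin l → ℝ) (q : Fin p → ℝ) :
    g ⬝ᵥ (matF F0 F q *ᵥ s + matE E0 E q *ᵥ δ) =
      g ⬝ᵥ (F0 *ᵥ s + E0 *ᵥ δ) + (fun k => g ⬝ᵥ (F k *ᵥ s + E k *ᵥ δ)) ⬝ᵥ q := by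
  simp only [matF, matE, add_mulVec, sum_mulVec, smul_mulVec, dotProduct_add, dotProduct_sum,
    dotProduct_smul, smul_eq_mul]
  simp only [dotProduct, add_mul, Finset.sum_add_distrib, mul_comm (q _)]
  ring

theorem subtangentiality_from_vertices_general {n l p μ ν η H : ℕ}
    (F0 : Matrix (Fin n) (Fin n) ℝ) (F : Fin p → Matrix (Fin n) (Fin n) ℝ)
    (E0 : Matrix (Fin n) (Fin l) ℝ) (E : Fin p → Matrix (Fin n) (Fin l) ℝ)
    (v : Fin μ → Fin n → ℝ) (w : Fin ν → Fin p → ℝ) (r : Fin η → Fin l → ℝ)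
    (g : Fin H → Fin n → ℝ) (ξ : Fin H → ℝ)
    (S : Set (Fin n → ℝ))
    (hS : S = convexHull ℝ (Set.range v))
    (hS' : S = {s : Fin n → ℝ | ∀ h, g h ⬝ᵥ s ≤ ξ h})
    (hyp : ∀ (i : Fin μ) (j : Fin ν) (k : Fin η) (h : Fin H), g h ⬝ᵥ v i = ξ h →
      g h ⬝ᵥ ((matF F0 F (w j)).mulVec (v i) + (matE E0 E (w j)).mulVec (r k)) ≤ 0) :
    ∀ s ∈ S, ∀ q ∈ convexHull ℝ (Set.range w), ∀ δ ∈ convexHull ℝ (Set.range r),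
      ∀ h : Fin H, g h ⬝ᵥ s = ξ h →
        g h ⬝ᵥ ((matF F0 F q).mulVec s + (matE E0 E q).mulVec δ) ≤ 0 := by
  intro s hs q hq δ hδ h hsh
  have hv_le : ∀ y ∈ range v, g h ⬝ᵥ y ≤ ξ h := fun y hy =>
    (hS' ▸ hS ▸ subset_convexHull ℝ _ hy : y ∈ {s : Fin n → ℝ | ∀ h, g h ⬝ᵥ s ≤ ξ h}) h
  have hs_face : s ∈ convexHull ℝ {y ∈ range v | g h ⬝ᵥ y = ξ h} :=
    mem_convexHull_setOf_eq_of_forall_le (dotProductEquiv ℝ _ (g h)) hv_le (hS ▸ hs) hsh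
  obtain ⟨_, ⟨⟨i, rfl⟩, hi⟩, hs_le⟩ :=
    exists_dotProduct_mulVec_ge_of_mem_convexHull (g h) (matF F0 F q) hs_face
  obtain ⟨_, ⟨j, rfl⟩, hq_le⟩ := exists_dotProduct_ge_of_mem_convexHull
    (fun k => g h ⬝ᵥ (F k *ᵥ v i + E k *ᵥ δ)) hq
  obtain ⟨_, ⟨k, rfl⟩, hδ_le⟩ :=
    exists_dotProduct_mulVec_ge_of_mem_convexHull (g h) (matE E0 E (w j)) hδ
  calc g h ⬝ᵥ (matF F0 F q *ᵥ s + matE E0 E q *ᵥ δ)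
      ≤ g h ⬝ᵥ (matF F0 F q *ᵥ v i + matE E0 E q *ᵥ δ) := by
        simp only [dotProduct_add]; linarith
    _ ≤ g h ⬝ᵥ (matF F0 F (w j) *ᵥ v i + matE E0 E (w j) *ᵥ δ) := by
        simp only [dotProduct_matF_mulVec_add_matE_mulVec]; linarith
    _ ≤ g h ⬝ᵥ (matF F0 F (w j) *ᵥ v i + matE E0 E (w j) *ᵥ r k) := by
        simp only [dotProduct_add]; linarith
    _ ≤ 0 := hyp i j k h hi

/-- Sufficiency step in the vertex characterization of positive `D`-invariance:
the sub-tangentiality condition, expressed through the delimiting planes of the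
polytope `S`, needs to be checked only at the vertices of `S`, `Q` and `D`. -/
theorem subtangentiality_from_vertices {n l p μ ν η H : ℕ}
    (F0 : Matrix (Fin n) (Fin n) ℝ) (F : Fin p → Matrix (Fin n) (Fin n) ℝ)
    (E0 : Matrix (Fin n) (Fin l) ℝ) (E : Fin p → Matrix (Fin n) (Fin l) ℝ)
    (v : Fin μ → Fin n → ℝ) (w : Fin ν → Fin p → ℝ) (r : Fin η → Fin l → ℝ)
    (g : Fin H → Fin n → ℝ) (ξ : Fin H → ℝ) (hξ : ∀ h, 0 < ξ h)
    (S : Set (Fin n → ℝ))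
    (hS : S = convexHull ℝ (Set.range v))
    (hS' : S = {s : Fin n → ℝ | ∀ h, g h ⬝ᵥ s ≤ ξ h})
    (hyp : ∀ (i : Fin μ) (j : Fin ν) (k : Fin η) (h : Fin H), g h ⬝ᵥ v i = ξ h →
      g h ⬝ᵥ ((matF F0 F (w j)).mulVec (v i) + (matE E0 E (w j)).mulVec (r k)) ≤ 0) :
    ∀ s ∈ S, ∀ q ∈ convexHull ℝ (Set.range w), ∀ δ ∈ convexHull ℝ (Set.range r),
      ∀ h : Fin H, g h ⬝ᵥ s = ξ h →
        g h ⬝ᵥ ((matF F0 F q).mulVec s + (matE E0 E q).mulVec δ) ≤ 0 :=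
  subtangentiality_from_vertices_general F0 F E0 E v w r g ξ S hS hS' hyp
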